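/- Let E and E' be real Hilbert spaces, X ⊆ E and Y ⊆ E' nonempty closed convex sets each of diameter at most D, and F : E × E' → ℝ a differentiable function that is convex-concave on X × Y, with saddle operator G(x,y) = (∇_x F(x,y), −∇_y F(x,y)). Assume G is monotone and ℓ-Lipschitz on X × Y and ‖G(z)‖ ≤ L for all z ∈ X × Y. Let δ ≥ 0 and let G̃, G̃' : E × E' → E × E' satisfy ‖G̃(z) − G(z)‖ ≤ δ and ‖G̃'(z) − G(z)‖ ≤ δ for all z ∈ X × Y. Let T ≥ 1, set α = 1/(ℓ√T), fix z₀ ∈ X × Y, and define two trajectories z_{t+1} = Π_{X×Y}(z_t − α·G̃(z_t)) and z'_{t+1} = Π_{X×Y}(z_t' − α·G̃'(z_t')) for t = 0, …, T−1 with z₀' = z₀, and let z̄_T = (x̄_T, ȳ_T) and z̄'_T be the respective averages (1/T)·Σ_{t=0}^{T−1} of the iterates. Then: (i) F(x̄_T, y) − F(x, ȳ_T) ≤ ℓD²/√T + (L² + δ²)/(ℓ√T) + √2·δ·D for every (x,y) ∈ X × Y; and (ii) ‖z̄_T − z̄'_T‖² ≤ (4e/(3ℓ²))·δ²·T. -/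

import Mathlib

open RealInnerProductSpace

noncomputable section

variable {E E' : Type*} [NormedAddCommGroup E] [InnerProductSpace ℝ E] [CompleteSpace E]
  [NormedAddCommGroup E'] [InnerProductSpace ℝ E'] [CompleteSpace E']

/-- The saddle operator `G(x,y) = (∇ₓ F(x,y), −∇_y F(x,y))` on the Hilbert product
`WithLp 2 (E × E')`. -/
def saddleOp (F : E × E' → ℝ) (z : WithLp 2 (E × E')) : WithLp 2 (E × E') :=
  (WithLp.equiv 2 (E × E')).symm
    (gradient (fun u => F (u, (WithLp.equiv 2 (E × E') z).2)) (WithLp.equiv 2 (E × E') z).1,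
     -gradient (fun v => F ((WithLp.equiv 2 (E × E') z).1, v)) (WithLp.equiv 2 (E × E') z).2)

/-- `X × Y` as a subset of the Hilbert product. -/
def prodSet (X : Set E) (Y : Set E') : Set (WithLp 2 (E × E')) :=
  (WithLp.equiv 2 (E × E')) ⁻¹' (X ×ˢ Y)

/-- `p` is the metric projection of `v` onto `S`. -/
def IsProjOn {H : Type*} [NormedAddCommGroup H] (S : Set H) (v p : H) : Prop :=
  p ∈ S ∧ ∀ w ∈ S, ‖v - p‖ ≤ ‖v - w‖

/-!
For (i), the variational inequality of the projection gives the one-step bound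
`2α⟪g, z_t - w⟫ ≤ ‖z_t - w‖² - ‖z_{t+1} - w‖² + α²‖g‖²` for the oracle vector `g = G̃(z_t)`,
which telescopes; replacing `G̃` by `G` costs `⟪G - G̃, z_t - w⟫ ≤ √2·δ·D` per step. The
first-order inequalities of the convex-concave `F` bound `F(x_t, y) - F(x, y_t)` by
`⟪G(z_t), z_t - w⟫`, and Jensen's inequality passes to the averaged iterate.

For (ii), the projection is nonexpansive, and monotonicity plus `ℓ`-Lipschitz continuity of `G`
give `‖u - α(G z - G z')‖² ≤ (1 + α²ℓ²)‖u‖²` for `u = z - z'`. So each step expands the distance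
between the two trajectories by at most `√(1 + α²ℓ²)` and adds `2αδ`; with `α²ℓ² = 1/T` the total
expansion over `T` steps is at most `(1 + 1/T)^(T/2) ≤ √e`. Hence `‖z_t - z'_t‖ ≤ 2αδ·t·√e`, and
averaging over `t < T` gives `‖z̄_T - z̄'_T‖ ≤ αδ·√e·T`.
-/

open Finset

section Projection

variable {H : Type*} [NormedAddCommGroup H] {S : Set H}

theorem iterate_mem_of_isProjOn {v z : ℕ → H} {T : ℕ} (hz0 : z 0 ∈ S)
    (hupd : ∀ t < T, IsProjOn S (v t) (z (t + 1))) : ∀ t ≤ T, z t ∈ S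
  | 0, _ => hz0
  | t + 1, ht => (hupd t ht).1

variable [InnerProductSpace ℝ H]

theorem IsProjOn.inner_sub_nonpos (hS : Convex ℝ S) {v p : H} (hp : IsProjOn S v p) {w : H}
    (hw : w ∈ S) : ⟪v - p, w - p⟫ ≤ 0 := by
  have : Nonempty S := ⟨⟨p, hp.1⟩⟩
  refine (norm_eq_iInf_iff_real_inner_le_zero hS hp.1).1 ?_ w hw
  refine le_antisymm (le_ciInf fun w => hp.2 w w.2) (ciInf_le ⟨0, ?_⟩ (⟨p, hp.1⟩ : S))
  rintro _ ⟨w, rfl⟩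
  exact norm_nonneg _

theorem IsProjOn.norm_sub_sq_le (hS : Convex ℝ S) {v p : H} (hp : IsProjOn S v p) {w : H}
    (hw : w ∈ S) : ‖p - w‖ ^ 2 ≤ ‖v - w‖ ^ 2 := by
  have h := hp.inner_sub_nonpos hS hw
  have e : ‖v - w‖ ^ 2 = ‖v - p‖ ^ 2 - 2 * ⟪v - p, w - p⟫ + ‖p - w‖ ^ 2 := by
    rw [show v - w = (v - p) - (w - p) by abel, norm_sub_sq_real, norm_sub_rev w p]
  nlinarith [sq_nonneg ‖v - p‖]

theorem IsProjOn.norm_sub_le_norm_sub (hS : Convex ℝ S) {v₁ v₂ p₁ p₂ : H} (h₁ : IsProjOn S v₁ p₁)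
    (h₂ : IsProjOn S v₂ p₂) : ‖p₁ - p₂‖ ≤ ‖v₁ - v₂‖ := by
  have a₁ := h₁.inner_sub_nonpos hS h₂.1
  have a₂ := h₂.inner_sub_nonpos hS h₁.1
  have key : ‖p₁ - p₂‖ ^ 2 ≤ ⟪v₁ - v₂, p₁ - p₂⟫ := by
    have e : ⟪v₁ - v₂, p₁ - p₂⟫ - ‖p₁ - p₂‖ ^ 2 = -⟪v₁ - p₁, p₂ - p₁⟫ - ⟪v₂ - p₂, p₁ - p₂⟫ := by
      rw [← real_inner_self_eq_norm_sq]
      simp only [inner_sub_left, inner_sub_right]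
      ring
    linarith
  nlinarith [real_inner_le_norm (v₁ - v₂) (p₁ - p₂), norm_nonneg (p₁ - p₂),
    norm_nonneg (v₁ - v₂)]

theorem IsProjOn.two_mul_inner_le (hS : Convex ℝ S) {α : ℝ} {z g z₁ w : H}
    (hp : IsProjOn S (z - α • g) z₁) (hw : w ∈ S) :
    2 * α * ⟪g, z - w⟫ ≤ ‖z - w‖ ^ 2 - ‖z₁ - w‖ ^ 2 + α ^ 2 * ‖g‖ ^ 2 := by
  have h := hp.norm_sub_sq_le hS hw
  rw [sub_right_comm, norm_sub_sq_real (z - w), norm_smul, real_inner_smul_right, real_inner_comm,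
    mul_pow, Real.norm_eq_abs, sq_abs] at h
  linarith

theorem two_mul_sum_inner_le_of_isProjOn (hS : Convex ℝ S) {α : ℝ} {z g : ℕ → H} {w : H}
    (hw : w ∈ S) : ∀ {T : ℕ}, (∀ t < T, IsProjOn S (z t - α • g t) (z (t + 1))) →
      2 * α * ∑ t ∈ range T, ⟪g t, z t - w⟫ ≤
        ‖z 0 - w‖ ^ 2 - ‖z T - w‖ ^ 2 + α ^ 2 * ∑ t ∈ range T, ‖g t‖ ^ 2
  | 0, _ => by simp
  | T + 1, hupd => by
    have ih := two_mul_sum_inner_le_of_isProjOn hS hw (T := T) fun t ht => hupd t (by omega)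
    have step := (hupd T T.lt_succ_self).two_mul_inner_le hS hw
    rw [sum_range_succ, sum_range_succ]
    linear_combination ih + step

theorem sum_inner_le_of_isProjOn_inexact (hS : Convex ℝ S) {α : ℝ} (hα : 0 < α)
    {G Gt : H → H} {z : ℕ → H} {w : H} (hw : w ∈ S) {T : ℕ} {M R δ : ℝ}
    (hupd : ∀ t < T, IsProjOn S (z t - α • Gt (z t)) (z (t + 1)))
    (hM : ∀ t < T, ‖Gt (z t)‖ ^ 2 ≤ M) (hδ : ∀ t < T, ‖Gt (z t) - G (z t)‖ ≤ δ)
    (hR : ∀ t ≤ T, ‖z t - w‖ ≤ R) :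
    ∑ t ∈ range T, ⟪G (z t), z t - w⟫ ≤ R ^ 2 / (2 * α) + T * (α * M / 2 + δ * R) := by
  have hregret := two_mul_sum_inner_le_of_isProjOn hS hw hupd
  have hz0 : ‖z 0 - w‖ ^ 2 ≤ R ^ 2 := pow_le_pow_left₀ (norm_nonneg _) (hR 0 T.zero_le) 2
  have hsumM : ∑ t ∈ range T, ‖Gt (z t)‖ ^ 2 ≤ T * M := by
    simpa using sum_le_sum fun t ht => hM t (mem_range.1 ht)
  have herr : ∑ t ∈ range T, ⟪G (z t) - Gt (z t), z t - w⟫ ≤ T * (δ * R) := by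
    refine (sum_le_sum fun t ht => ?_).trans_eq (by simp : ∑ _ ∈ range T, δ * R = T * (δ * R))
    have ht := mem_range.1 ht
    calc _ ≤ ‖G (z t) - Gt (z t)‖ * ‖z t - w‖ := real_inner_le_norm _ _
      _ ≤ δ * R := by
        rw [norm_sub_rev]
        exact mul_le_mul (hδ t ht) (hR t ht.le) (norm_nonneg _) ((norm_nonneg _).trans (hδ t ht))
  have hsplit : ∑ t ∈ range T, ⟪G (z t), z t - w⟫ =
      ∑ t ∈ range T, ⟪Gt (z t), z t - w⟫ + ∑ t ∈ range T, ⟪G (z t) - Gt (z t), z t - w⟫ := by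
    rw [← sum_add_distrib]; exact sum_congr rfl fun t _ => by rw [inner_sub_left]; ring
  have hexact : ∑ t ∈ range T, ⟪Gt (z t), z t - w⟫ ≤ R ^ 2 / (2 * α) + T * (α * M / 2) := by
    rw [div_add' _ _ _ (by positivity), le_div_iff₀ (by positivity)]
    nlinarith [sq_nonneg ‖z T - w‖, mul_le_mul_of_nonneg_left hsumM (sq_nonneg α)]
  linarith

end Projection

section Stability

variable {H : Type*} [NormedAddCommGroup H] [InnerProductSpace ℝ H] {S : Set H}

theorem norm_sub_smul_sq_le {u g : H} {α ℓ : ℝ} (hα : 0 ≤ α) (hmono : 0 ≤ ⟪g, u⟫)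
    (hlip : ‖g‖ ≤ ℓ * ‖u‖) : ‖u - α • g‖ ^ 2 ≤ (1 + α ^ 2 * ℓ ^ 2) * ‖u‖ ^ 2 := by
  have hg : ‖g‖ ^ 2 ≤ ℓ ^ 2 * ‖u‖ ^ 2 := by
    rw [← mul_pow]; exact pow_le_pow_left₀ (norm_nonneg g) hlip 2
  rw [norm_sub_sq_real, norm_smul, real_inner_smul_right, real_inner_comm, mul_pow,
    Real.norm_eq_abs, sq_abs]
  nlinarith [mul_nonneg hα hmono, mul_le_mul_of_nonneg_left hg (sq_nonneg α)]

theorem IsProjOn.norm_sub_le_of_inexact (hS : Convex ℝ S) {α ℓ δ : ℝ} (hα : 0 ≤ α)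
    {z z' g g' gt gt' z₁ z₁' : H} (hmono : 0 ≤ ⟪g - g', z - z'⟫)
    (hlip : ‖g - g'‖ ≤ ℓ * ‖z - z'‖) (hgt : ‖gt - g‖ ≤ δ) (hgt' : ‖gt' - g'‖ ≤ δ)
    (hp : IsProjOn S (z - α • gt) z₁) (hp' : IsProjOn S (z' - α • gt') z₁') :
    ‖z₁ - z₁'‖ ≤ √(1 + α ^ 2 * ℓ ^ 2) * ‖z - z'‖ + 2 * α * δ := by
  have hexact : ‖(z - z') - α • (g - g')‖ ≤ √(1 + α ^ 2 * ℓ ^ 2) * ‖z - z'‖ := by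
    rw [← Real.sqrt_sq (norm_nonneg (_ - _)), ← Real.sqrt_sq (norm_nonneg (z - z')),
      ← Real.sqrt_mul (by positivity)]
    exact Real.sqrt_le_sqrt (norm_sub_smul_sq_le hα (real_inner_comm (g - g') _ ▸ hmono) hlip)
  have herr : ‖α • (gt - g)‖ ≤ α * δ := by
    rw [norm_smul, Real.norm_of_nonneg hα]; exact mul_le_mul_of_nonneg_left hgt hα
  have herr' : ‖α • (gt' - g')‖ ≤ α * δ := by
    rw [norm_smul, Real.norm_of_nonneg hα]; exact mul_le_mul_of_nonneg_left hgt' hα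
  have hsplit : (z - α • gt) - (z' - α • gt') =
      ((z - z') - α • (g - g')) - α • (gt - g) + α • (gt' - g') := by
    simp only [smul_sub]; abel
  calc ‖z₁ - z₁'‖ ≤ ‖(z - α • gt) - (z' - α • gt')‖ := hp.norm_sub_le_norm_sub hS hp'
    _ ≤ ‖(z - z') - α • (g - g')‖ + ‖α • (gt - g)‖ + ‖α • (gt' - g')‖ := by
      rw [hsplit]; exact (norm_add_le _ _).trans (add_le_add_left (norm_sub_le _ _) _)
    _ ≤ √(1 + α ^ 2 * ℓ ^ 2) * ‖z - z'‖ + 2 * α * δ := by linarith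

theorem le_mul_mul_pow_of_le_mul_add {a : ℕ → ℝ} {b c : ℝ} {T : ℕ} (hb : 0 ≤ b) (hc : 1 ≤ c)
    (h0 : a 0 ≤ 0) (hstep : ∀ t < T, a (t + 1) ≤ c * a t + b) : ∀ t ≤ T, a t ≤ b * t * c ^ t
  | 0, _ => by simpa using h0
  | t + 1, ht => by
    have ih := le_mul_mul_pow_of_le_mul_add hb hc h0 hstep t (by omega)
    calc a (t + 1) ≤ c * a t + b := hstep t ht
      _ ≤ c * (b * t * c ^ t) + b * c ^ (t + 1) :=
        add_le_add (mul_le_mul_of_nonneg_left ih (by linarith))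
          (le_mul_of_one_le_right hb (one_le_pow₀ hc))
      _ = b * (t + 1 : ℕ) * c ^ (t + 1) := by push_cast; ring

theorem sum_range_natCast_le (T : ℕ) : ∑ t ∈ range T, (t : ℝ) ≤ T ^ 2 / 2 := by
  induction T with
  | zero => simp
  | succ T ih => rw [sum_range_succ]; push_cast; nlinarith

theorem norm_average_sub_average_sq_le (hS : Convex ℝ S) {G Gt Gt' : H → H} {α ℓ δ : ℝ}
    (hα : 0 ≤ α) (hδ : 0 ≤ δ)
    (hmono : ∀ z₁ ∈ S, ∀ z₂ ∈ S, 0 ≤ ⟪G z₁ - G z₂, z₁ - z₂⟫)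
    (hlip : ∀ z₁ ∈ S, ∀ z₂ ∈ S, ‖G z₁ - G z₂‖ ≤ ℓ * ‖z₁ - z₂‖)
    (hGt : ∀ z ∈ S, ‖Gt z - G z‖ ≤ δ) (hGt' : ∀ z ∈ S, ‖Gt' z - G z‖ ≤ δ)
    {z z' : ℕ → H} {T : ℕ} (hz0 : z 0 ∈ S) (hz0' : z' 0 = z 0)
    (hupd : ∀ t < T, IsProjOn S (z t - α • Gt (z t)) (z (t + 1)))
    (hupd' : ∀ t < T, IsProjOn S (z' t - α • Gt' (z' t)) (z' (t + 1))) :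
    ‖(T : ℝ)⁻¹ • ∑ t ∈ range T, z t - (T : ℝ)⁻¹ • ∑ t ∈ range T, z' t‖ ^ 2 ≤
      α ^ 2 * δ ^ 2 * T ^ 2 * (1 + α ^ 2 * ℓ ^ 2) ^ T := by
  set c := √(1 + α ^ 2 * ℓ ^ 2)
  have hc : 1 ≤ c := Real.one_le_sqrt.2 (by nlinarith)
  have hmem := iterate_mem_of_isProjOn hz0 hupd
  have hmem' := iterate_mem_of_isProjOn (hz0' ▸ hz0) hupd'
  have hdist : ∀ t ≤ T, ‖z t - z' t‖ ≤ 2 * α * δ * t * c ^ T := by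
    intro t ht
    refine (le_mul_mul_pow_of_le_mul_add (a := fun t => ‖z t - z' t‖) (b := 2 * α * δ)
      (by positivity) hc (by simp [hz0']) (fun s hs => ?_) t ht).trans ?_
    · exact (hupd s hs).norm_sub_le_of_inexact hS hα (hmono _ (hmem s hs.le) _ (hmem' s hs.le))
        (hlip _ (hmem s hs.le) _ (hmem' s hs.le)) (hGt _ (hmem s hs.le)) (hGt' _ (hmem' s hs.le))
        (hupd' s hs)
    · gcongr
  have hnorm : ‖(T : ℝ)⁻¹ • ∑ t ∈ range T, z t - (T : ℝ)⁻¹ • ∑ t ∈ range T, z' t‖ ≤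
      α * δ * c ^ T * T :=
    calc _ = (T : ℝ)⁻¹ * ‖∑ t ∈ range T, (z t - z' t)‖ := by
          rw [← smul_sub, ← sum_sub_distrib, norm_smul, norm_inv, RCLike.norm_natCast]
      _ ≤ (T : ℝ)⁻¹ * ∑ t ∈ range T, 2 * α * δ * t * c ^ T := by
          gcongr
          exact (norm_sum_le _ _).trans (sum_le_sum fun t ht => hdist t (mem_range.1 ht).le)
      _ = (T : ℝ)⁻¹ * (2 * α * δ * c ^ T * ∑ t ∈ range T, (t : ℝ)) := by
          congr 1; rw [mul_sum]; exact sum_congr rfl fun t _ => by ring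
      _ ≤ (T : ℝ)⁻¹ * (2 * α * δ * c ^ T * (T ^ 2 / 2)) := by
          gcongr; exact sum_range_natCast_le T
      _ = α * δ * c ^ T * ((T : ℝ)⁻¹ * T * T) := by ring
      _ = α * δ * c ^ T * T := by rw [inv_mul_mul_self]
  have hc2 : (c ^ T) ^ 2 = (1 + α ^ 2 * ℓ ^ 2) ^ T := by
    rw [← pow_mul, mul_comm, pow_mul, Real.sq_sqrt (by positivity)]
  calc _ ≤ (α * δ * c ^ T * T) ^ 2 := pow_le_pow_left₀ (norm_nonneg _) hnorm 2
    _ = α ^ 2 * δ ^ 2 * T ^ 2 * (1 + α ^ 2 * ℓ ^ 2) ^ T := by rw [← hc2]; ring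

end Stability

section FirstOrder

variable {V : Type*} [NormedAddCommGroup V] [NormedSpace ℝ V] {s : Set V} {f : V → ℝ}
  {f' : V →L[ℝ] ℝ} {u x : V}

theorem ConvexOn.apply_sub_le_of_hasFDerivAt (hf : ConvexOn ℝ s f) (hu : u ∈ s) (hx : x ∈ s)
    (hf' : HasFDerivAt f f' u) : f' (x - u) ≤ f x - f u := by
  have hline := hf.comp_affineMap (AffineMap.lineMap (k := ℝ) u x)
  have hf'0 : HasFDerivAt f f' (AffineMap.lineMap (k := ℝ) u x 0) := by simpa using hf'
  have hd : HasDerivAt (f ∘ AffineMap.lineMap (k := ℝ) u x) (f' (x - u)) 0 :=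
    hf'0.comp_hasDerivAt 0 AffineMap.hasDerivAt_lineMap
  simpa [slope_def_field] using
    hline.le_slope_of_hasDerivAt (x := 0) (y := 1) (by simpa) (by simpa) zero_lt_one hd

theorem ConcaveOn.sub_le_apply_sub_of_hasFDerivAt (hf : ConcaveOn ℝ s f) (hu : u ∈ s)
    (hx : x ∈ s) (hf' : HasFDerivAt f f' u) : f x - f u ≤ f' (x - u) := by
  have := hf.neg.apply_sub_le_of_hasFDerivAt hu hx hf'.neg
  simp only [neg_apply, Pi.neg_apply] at this
  linarith

end FirstOrder

section ProdSet

variable {V W : Type*} {X : Set V} {Y : Set W}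

theorem mem_prodSet {z : WithLp 2 (V × W)} : z ∈ prodSet X Y ↔ z.fst ∈ X ∧ z.snd ∈ Y :=
  Iff.rfl

theorem convex_prodSet [AddCommGroup V] [Module ℝ V] [AddCommGroup W] [Module ℝ W]
    (hX : Convex ℝ X) (hY : Convex ℝ Y) : Convex ℝ (prodSet X Y) :=
  (hX.prod hY).linear_preimage (WithLp.linearEquiv 2 ℝ (V × W)).toLinearMap

theorem norm_sub_le_of_mem_prodSet [NormedAddCommGroup V] [NormedAddCommGroup W] {D : ℝ}
    (hXD : ∀ s₁ ∈ X, ∀ s₂ ∈ X, ‖s₁ - s₂‖ ≤ D) (hYD : ∀ s₁ ∈ Y, ∀ s₂ ∈ Y, ‖s₁ - s₂‖ ≤ D)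
    {z₁ z₂ : WithLp 2 (V × W)} (h₁ : z₁ ∈ prodSet X Y) (h₂ : z₂ ∈ prodSet X Y) :
    ‖z₁ - z₂‖ ≤ √2 * D := by
  rw [mem_prodSet] at h₁ h₂
  have hx := hXD _ h₁.1 _ h₂.1
  have hy := hYD _ h₁.2 _ h₂.2
  have hD : 0 ≤ D := (norm_nonneg _).trans hx
  refine le_of_pow_le_pow_left₀ two_ne_zero (by positivity) ?_
  rw [mul_pow, Real.sq_sqrt zero_le_two, WithLp.prod_norm_sq_eq_of_L2]
  have hx' : ‖(z₁ - z₂).fst‖ ≤ D := hx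
  have hy' : ‖(z₁ - z₂).snd‖ ≤ D := hy
  nlinarith [norm_nonneg (z₁ - z₂).fst, norm_nonneg (z₁ - z₂).snd]

theorem sub_le_average_of_convexOn_concaveOn [AddCommGroup V] [Module ℝ V] [AddCommGroup W]
    [Module ℝ W] {F : V × W → ℝ} (hcvx : ∀ y ∈ Y, ConvexOn ℝ X (fun x => F (x, y)))
    (hccv : ∀ x ∈ X, ConcaveOn ℝ Y (fun y => F (x, y))) {z : ℕ → WithLp 2 (V × W)} {T : ℕ}
    (hT : 0 < T) (hz : ∀ t < T, z t ∈ prodSet X Y) {x : V} {y : W} (hx : x ∈ X) (hy : y ∈ Y) :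
    F (((T : ℝ)⁻¹ • ∑ t ∈ range T, z t).fst, y) - F (x, ((T : ℝ)⁻¹ • ∑ t ∈ range T, z t).snd) ≤
      (T : ℝ)⁻¹ * ∑ t ∈ range T, (F ((z t).fst, y) - F (x, (z t).snd)) := by
  have hw : ∑ _t ∈ range T, (T : ℝ)⁻¹ = 1 := by simp [hT.ne']
  have hfst : ((T : ℝ)⁻¹ • ∑ t ∈ range T, z t).fst = ∑ t ∈ range T, (T : ℝ)⁻¹ • (z t).fst := by
    rw [← WithLp.ofLp_fst, WithLp.ofLp_smul, WithLp.ofLp_sum, Prod.smul_fst, Prod.fst_sum,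
      smul_sum]
    rfl
  have hsnd : ((T : ℝ)⁻¹ • ∑ t ∈ range T, z t).snd = ∑ t ∈ range T, (T : ℝ)⁻¹ • (z t).snd := by
    rw [← WithLp.ofLp_snd, WithLp.ofLp_smul, WithLp.ofLp_sum, Prod.smul_snd, Prod.snd_sum,
      smul_sum]
    rfl
  have hJx := (hcvx y hy).map_sum_le (p := fun t => (z t).fst) (fun t _ => by positivity) hw
    fun t ht => (mem_prodSet.1 (hz t (mem_range.1 ht))).1
  have hJy := (hccv x hx).le_map_sum (p := fun t => (z t).snd) (fun t _ => by positivity) hw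
    fun t ht => (mem_prodSet.1 (hz t (mem_range.1 ht))).2
  rw [hfst, hsnd, mul_sum]
  simp only [smul_eq_mul, mul_sub, sum_sub_distrib] at hJx hJy ⊢
  linarith

end ProdSet

section Saddle

variable {X : Set E} {Y : Set E'} {F : E × E' → ℝ}

theorem sub_le_inner_saddleOp (hF : Differentiable ℝ F)
    (hcvx : ∀ y ∈ Y, ConvexOn ℝ X (fun x => F (x, y)))
    (hccv : ∀ x ∈ X, ConcaveOn ℝ Y (fun y => F (x, y))) {z w : WithLp 2 (E × E')}
    (hz : z ∈ prodSet X Y) (hw : w ∈ prodSet X Y) :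
    F (z.fst, w.snd) - F (w.fst, z.snd) ≤ ⟪saddleOp F z, z - w⟫ := by
  have hdx : Differentiable ℝ fun x => F (x, z.snd) :=
    hF.comp (differentiable_id.prodMk (differentiable_const _))
  have hdy : Differentiable ℝ fun y => F (z.fst, y) :=
    hF.comp ((differentiable_const _).prodMk differentiable_id)
  rw [mem_prodSet] at hz hw
  have hx := (hcvx _ hz.2).apply_sub_le_of_hasFDerivAt hz.1 hw.1 (hdx z.fst).hasFDerivAt
  have hy := (hccv _ hz.1).sub_le_apply_sub_of_hasFDerivAt hz.2 hw.2 (hdy z.snd).hasFDerivAt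
  have hinner : ⟪saddleOp F z, z - w⟫ =
      fderiv ℝ (fun x => F (x, z.snd)) z.fst (z.fst - w.fst) -
        fderiv ℝ (fun y => F (z.fst, y)) z.snd (z.snd - w.snd) := by
    rw [WithLp.prod_inner_apply]
    simp [saddleOp, inner_gradient_left, sub_eq_add_neg]
  rw [hinner, ← neg_sub w.fst, ← neg_sub w.snd, map_neg, map_neg]
  linarith

theorem gda_gap_le (hXcv : Convex ℝ X) (hYcv : Convex ℝ Y) {D : ℝ}
    (hXD : ∀ s₁ ∈ X, ∀ s₂ ∈ X, ‖s₁ - s₂‖ ≤ D) (hYD : ∀ s₁ ∈ Y, ∀ s₂ ∈ Y, ‖s₁ - s₂‖ ≤ D)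
    (hF : Differentiable ℝ F) (hcvx : ∀ y ∈ Y, ConvexOn ℝ X (fun x => F (x, y)))
    (hccv : ∀ x ∈ X, ConcaveOn ℝ Y (fun y => F (x, y))) {L : ℝ}
    (hL : ∀ z ∈ prodSet X Y, ‖saddleOp F z‖ ≤ L) {δ : ℝ}
    {Gt : WithLp 2 (E × E') → WithLp 2 (E × E')}
    (hGt : ∀ z ∈ prodSet X Y, ‖Gt z - saddleOp F z‖ ≤ δ) {α : ℝ} (hα : 0 < α) {T : ℕ}
    (hT : 0 < T) {z : ℕ → WithLp 2 (E × E')} (hz0 : z 0 ∈ prodSet X Y)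
    (hupd : ∀ t < T, IsProjOn (prodSet X Y) (z t - α • Gt (z t)) (z (t + 1)))
    {x : E} {y : E'} (hx : x ∈ X) (hy : y ∈ Y) :
    F (((T : ℝ)⁻¹ • ∑ t ∈ range T, z t).fst, y) - F (x, ((T : ℝ)⁻¹ • ∑ t ∈ range T, z t).snd) ≤
      D ^ 2 / (α * T) + α * (L ^ 2 + δ ^ 2) + √2 * δ * D := by
  have hmem := iterate_mem_of_isProjOn hz0 hupd
  have hw : WithLp.toLp 2 (x, y) ∈ prodSet X Y := ⟨hx, hy⟩
  have hGt_sq : ∀ t < T, ‖Gt (z t)‖ ^ 2 ≤ 2 * (L ^ 2 + δ ^ 2) := fun t ht => by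
    have h : ‖Gt (z t)‖ ≤ L + δ := (norm_le_norm_add_norm_sub' _ (saddleOp F (z t))).trans
      (add_le_add (hL _ (hmem t ht.le)) (hGt _ (hmem t ht.le)))
    nlinarith [pow_le_pow_left₀ (norm_nonneg _) h 2, sq_nonneg (L - δ)]
  have hregret := sum_inner_le_of_isProjOn_inexact (convex_prodSet hXcv hYcv) hα hw hupd hGt_sq
    (fun t ht => hGt _ (hmem t ht.le)) fun t ht => norm_sub_le_of_mem_prodSet hXD hYD (hmem t ht) hw
  have hT' : (0 : ℝ) < T := Nat.cast_pos.2 hT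
  calc _ ≤ (T : ℝ)⁻¹ * ∑ t ∈ range T, (F ((z t).fst, y) - F (x, (z t).snd)) :=
        sub_le_average_of_convexOn_concaveOn hcvx hccv hT (fun t ht => hmem t ht.le) hx hy
    _ ≤ (T : ℝ)⁻¹ * ∑ t ∈ range T, ⟪saddleOp F (z t), z t - WithLp.toLp 2 (x, y)⟫ := by
        gcongr with t ht
        exact sub_le_inner_saddleOp hF hcvx hccv (hmem t (mem_range.1 ht).le) hw
    _ ≤ (T : ℝ)⁻¹ *
          ((√2 * D) ^ 2 / (2 * α) + T * (α * (2 * (L ^ 2 + δ ^ 2)) / 2 + δ * (√2 * D))) :=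
        mul_le_mul_of_nonneg_left hregret (by positivity)
    _ = D ^ 2 / (α * T) + α * (L ^ 2 + δ ^ 2) + √2 * δ * D := by
        rw [mul_pow, Real.sq_sqrt zero_le_two]; field_simp; ring

end Saddle

theorem gda_inexact_gradient_general
    (X : Set E) (Y : Set E') (hXcv : Convex ℝ X) (hYcv : Convex ℝ Y)
    (D : ℝ) (hXD : ∀ s₁ ∈ X, ∀ s₂ ∈ X, ‖s₁ - s₂‖ ≤ D) (hYD : ∀ s₁ ∈ Y, ∀ s₂ ∈ Y, ‖s₁ - s₂‖ ≤ D)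
    (F : E × E' → ℝ) (hFdiff : Differentiable ℝ F)
    (hcvx : ∀ y ∈ Y, ConvexOn ℝ X (fun x => F (x, y)))
    (hccv : ∀ x ∈ X, ConcaveOn ℝ Y (fun y => F (x, y)))
    (ℓ : ℝ) (hℓ : 0 < ℓ)
    (hmono : ∀ z₁ ∈ prodSet X Y, ∀ z₂ ∈ prodSet X Y,
      0 ≤ ⟪saddleOp F z₁ - saddleOp F z₂, z₁ - z₂⟫)
    (hlip : ∀ z₁ ∈ prodSet X Y, ∀ z₂ ∈ prodSet X Y,
      ‖saddleOp F z₁ - saddleOp F z₂‖ ≤ ℓ * ‖z₁ - z₂‖)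
    (L : ℝ) (hL : ∀ z ∈ prodSet X Y, ‖saddleOp F z‖ ≤ L)
    (δ : ℝ) (hδ : 0 ≤ δ)
    (Gt Gt' : WithLp 2 (E × E') → WithLp 2 (E × E'))
    (hGt : ∀ z ∈ prodSet X Y, ‖Gt z - saddleOp F z‖ ≤ δ)
    (hGt' : ∀ z ∈ prodSet X Y, ‖Gt' z - saddleOp F z‖ ≤ δ)
    (T : ℕ) (hT : 1 ≤ T) (α : ℝ) (hα : α = 1 / (ℓ * Real.sqrt T))
    (z z' : ℕ → WithLp 2 (E × E'))
    (hz0 : z 0 ∈ prodSet X Y) (hz0' : z' 0 = z 0)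
    (hupd : ∀ t < T, IsProjOn (prodSet X Y) (z t - α • Gt (z t)) (z (t + 1)))
    (hupd' : ∀ t < T, IsProjOn (prodSet X Y) (z' t - α • Gt' (z' t)) (z' (t + 1))) :
    (∀ x ∈ X, ∀ y ∈ Y,
      F ((WithLp.equiv 2 (E × E') ((T : ℝ)⁻¹ • ∑ t ∈ Finset.range T, z t)).1, y) -
        F (x, (WithLp.equiv 2 (E × E') ((T : ℝ)⁻¹ • ∑ t ∈ Finset.range T, z t)).2) ≤
      ℓ * D ^ 2 / Real.sqrt T + (L ^ 2 + δ ^ 2) / (ℓ * Real.sqrt T) +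
        Real.sqrt 2 * δ * D) ∧
    ‖(T : ℝ)⁻¹ • ∑ t ∈ Finset.range T, z t - (T : ℝ)⁻¹ • ∑ t ∈ Finset.range T, z' t‖ ^ 2 ≤
      4 * Real.exp 1 / (3 * ℓ ^ 2) * δ ^ 2 * T := by
  have hT0 : (0 : ℝ) < T := Nat.cast_pos.2 hT
  have hα0 : 0 < α := by rw [hα]; positivity
  have hα2 : α ^ 2 = (T : ℝ)⁻¹ / ℓ ^ 2 := by
    rw [hα, div_pow, mul_pow, Real.sq_sqrt hT0.le]; field_simp
  refine ⟨fun x hx y hy => ?_, ?_⟩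
  · calc _ ≤ D ^ 2 / (α * T) + α * (L ^ 2 + δ ^ 2) + √2 * δ * D :=
          gda_gap_le hXcv hYcv hXD hYD hFdiff hcvx hccv hL hGt hα0 hT hz0 hupd hx hy
      _ = _ := by
          rw [hα]; field_simp; rw [Real.sq_sqrt hT0.le]; ring
  · calc _ ≤ α ^ 2 * δ ^ 2 * T ^ 2 * (1 + α ^ 2 * ℓ ^ 2) ^ T :=
          norm_average_sub_average_sq_le (convex_prodSet hXcv hYcv) hα0.le hδ hmono hlip hGt hGt'
            hz0 hz0' hupd hupd'
      _ = δ ^ 2 * T / ℓ ^ 2 * (1 + (T : ℝ)⁻¹) ^ T := by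
          rw [hα2]; field_simp
      _ ≤ δ ^ 2 * T / ℓ ^ 2 * Real.exp 1 := by
          gcongr; exact Real.one_add_inv_pow_le_exp
      _ ≤ 4 * Real.exp 1 / (3 * ℓ ^ 2) * δ ^ 2 * T := by
          rw [show 4 * Real.exp 1 / (3 * ℓ ^ 2) * δ ^ 2 * T =
            4 / 3 * (δ ^ 2 * T / ℓ ^ 2 * Real.exp 1) by ring]
          exact le_mul_of_one_le_left (by positivity) (by norm_num)

/-- Theorem 4.2, part (ii).  Gradient descent ascent with stepsize
`α = 1/(ℓ√T)` and two `δ`-inexact deterministic gradient oracles `G̃, G̃'`, started from the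
same point: (i) the duality gap of the averaged iterate is at most
`ℓD²/√T + (L² + δ²)/(ℓ√T) + √2·δ·D`; (ii) `‖z̄_T − z̄'_T‖² ≤ (4e/(3ℓ²))·δ²·T`. -/
theorem gda_inexact_gradient
    (X : Set E) (Y : Set E') (hXne : X.Nonempty) (hYne : Y.Nonempty)
    (hXcl : IsClosed X) (hYcl : IsClosed Y) (hXcv : Convex ℝ X) (hYcv : Convex ℝ Y)
    (D : ℝ) (hXD : ∀ s₁ ∈ X, ∀ s₂ ∈ X, ‖s₁ - s₂‖ ≤ D) (hYD : ∀ s₁ ∈ Y, ∀ s₂ ∈ Y, ‖s₁ - s₂‖ ≤ D)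
    (F : E × E' → ℝ) (hFdiff : Differentiable ℝ F)
    (hcvx : ∀ y ∈ Y, ConvexOn ℝ X (fun x => F (x, y)))
    (hccv : ∀ x ∈ X, ConcaveOn ℝ Y (fun y => F (x, y)))
    (ℓ : ℝ) (hℓ : 0 < ℓ)
    (hmono : ∀ z₁ ∈ prodSet X Y, ∀ z₂ ∈ prodSet X Y,
      0 ≤ ⟪saddleOp F z₁ - saddleOp F z₂, z₁ - z₂⟫)
    (hlip : ∀ z₁ ∈ prodSet X Y, ∀ z₂ ∈ prodSet X Y,
      ‖saddleOp F z₁ - saddleOp F z₂‖ ≤ ℓ * ‖z₁ - z₂‖)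
    (L : ℝ) (hL : ∀ z ∈ prodSet X Y, ‖saddleOp F z‖ ≤ L)
    (δ : ℝ) (hδ : 0 ≤ δ)
    (Gt Gt' : WithLp 2 (E × E') → WithLp 2 (E × E'))
    (hGt : ∀ z ∈ prodSet X Y, ‖Gt z - saddleOp F z‖ ≤ δ)
    (hGt' : ∀ z ∈ prodSet X Y, ‖Gt' z - saddleOp F z‖ ≤ δ)
    (T : ℕ) (hT : 1 ≤ T) (α : ℝ) (hα : α = 1 / (ℓ * Real.sqrt T))
    (z z' : ℕ → WithLp 2 (E × E'))
    (hz0 : z 0 ∈ prodSet X Y) (hz0' : z' 0 = z 0)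
    (hupd : ∀ t < T, IsProjOn (prodSet X Y) (z t - α • Gt (z t)) (z (t + 1)))
    (hupd' : ∀ t < T, IsProjOn (prodSet X Y) (z' t - α • Gt' (z' t)) (z' (t + 1))) :
    (∀ x ∈ X, ∀ y ∈ Y,
      F ((WithLp.equiv 2 (E × E') ((T : ℝ)⁻¹ • ∑ t ∈ Finset.range T, z t)).1, y) -
        F (x, (WithLp.equiv 2 (E × E') ((T : ℝ)⁻¹ • ∑ t ∈ Finset.range T, z t)).2) ≤
      ℓ * D ^ 2 / Real.sqrt T + (L ^ 2 + δ ^ 2) / (ℓ * Real.sqrt T) +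
        Real.sqrt 2 * δ * D) ∧
    ‖(T : ℝ)⁻¹ • ∑ t ∈ Finset.range T, z t - (T : ℝ)⁻¹ • ∑ t ∈ Finset.range T, z' t‖ ^ 2 ≤
      4 * Real.exp 1 / (3 * ℓ ^ 2) * δ ^ 2 * T :=
  gda_inexact_gradient_general X Y hXcv hYcv D hXD hYD F hFdiff hcvx hccv ℓ hℓ hmono hlip L hL δ hδ
    Gt Gt' hGt hGt' T hT α hα z z' hz0 hz0' hupd hupd'
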